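/- arXiv:2307.03820 — 3 statements merged into one kernel-verified Lean document; each statement's English description precedes it below -/
import Mathlib

section
/- Suppose f is C⁴ on a neighbourhood of x(t₀), x is four times differentiable at t₀ ∈ (0,1), the natural pathway equation f(x(t)) = (1−t) • f(x(0)) holds for all t ∈ [0,1], and J := f′(x(t₀)) is a continuous linear isomorphism from E onto F. Then, writing v₁ = x′(t₀), v₂ = x″(t₀), v₃ = x⁽³⁾(t₀), the fourth derivative of the pathway satisfies x⁽⁴⁾(t₀) = −J⁻¹( f⁽⁴⁾(x(t₀))[v₁,v₁,v₁,v₁] + 6 • f⁽³⁾(x(t₀))[v₁,v₁,v₂] + 4 • f″(x(t₀))[v₁,v₃] + 3 • f″(x(t₀))[v₂,v₂] ). -/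
/-!
On `(0, 1)` the pathway equation makes `f ∘ x` affine, so near `t₀` its second, third and fourth
derivatives vanish. Computing these derivatives by the chain and Leibniz rules (Faà di Bruno to
order four) and merging terms by the symmetry of `f″` and `f⁽³⁾`, the fourth one reads
`f′[x⁽⁴⁾] + f⁽⁴⁾[x′,x′,x′,x′] + 6 f⁽³⁾[x′,x′,x″] + 4 f″[x′,x‴] + 3 f″[x″,x″] = 0` at `t₀`;
applying `J⁻¹` solves for `x⁽⁴⁾(t₀)`.
-/

open Topology Filter

section Curves

variable {𝕜 : Type*} [NontriviallyNormedField 𝕜]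
  {E G₁ G₂ G₃ H : Type*} [NormedAddCommGroup E] [NormedSpace 𝕜 E]
  [NormedAddCommGroup G₁] [NormedSpace 𝕜 G₁] [NormedAddCommGroup G₂] [NormedSpace 𝕜 G₂]
  [NormedAddCommGroup G₃] [NormedSpace 𝕜 G₃] [NormedAddCommGroup H] [NormedSpace 𝕜 H]
  {x : 𝕜 → E} {u₁ : 𝕜 → G₁} {u₂ : 𝕜 → G₂} {u₃ : 𝕜 → G₃}
  {x' : E} {u₁' : G₁} {u₂' : G₂} {u₃' : G₃} {t : 𝕜}

theorem HasFDerivAt.hasDerivAt_comp_apply {A : E → G₁ →L[𝕜] H} {A' : E →L[𝕜] G₁ →L[𝕜] H}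
    (hA : HasFDerivAt A A' (x t)) (hx : HasDerivAt x x' t) (hu₁ : HasDerivAt u₁ u₁' t) :
    HasDerivAt (fun s => A (x s) (u₁ s)) (A' x' (u₁ t) + A (x t) u₁') t :=
  (hA.comp_hasDerivAt t hx).clm_apply hu₁

theorem HasFDerivAt.hasDerivAt_comp_apply₂ {A : E → G₁ →L[𝕜] G₂ →L[𝕜] H}
    {A' : E →L[𝕜] G₁ →L[𝕜] G₂ →L[𝕜] H}
    (hA : HasFDerivAt A A' (x t)) (hx : HasDerivAt x x' t) (hu₁ : HasDerivAt u₁ u₁' t)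
    (hu₂ : HasDerivAt u₂ u₂' t) :
    HasDerivAt (fun s => A (x s) (u₁ s) (u₂ s))
      (A' x' (u₁ t) (u₂ t) + A (x t) u₁' (u₂ t) + A (x t) (u₁ t) u₂') t := by
  simpa using (hA.hasDerivAt_comp_apply hx hu₁).clm_apply hu₂

theorem HasFDerivAt.hasDerivAt_comp_apply₃ {A : E → G₁ →L[𝕜] G₂ →L[𝕜] G₃ →L[𝕜] H}
    {A' : E →L[𝕜] G₁ →L[𝕜] G₂ →L[𝕜] G₃ →L[𝕜] H}
    (hA : HasFDerivAt A A' (x t)) (hx : HasDerivAt x x' t) (hu₁ : HasDerivAt u₁ u₁' t)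
    (hu₂ : HasDerivAt u₂ u₂' t) (hu₃ : HasDerivAt u₃ u₃' t) :
    HasDerivAt (fun s => A (x s) (u₁ s) (u₂ s) (u₃ s))
      (A' x' (u₁ t) (u₂ t) (u₃ t) + A (x t) u₁' (u₂ t) (u₃ t) + A (x t) (u₁ t) u₂' (u₃ t)
        + A (x t) (u₁ t) (u₂ t) u₃') t := by
  simpa using (hA.hasDerivAt_comp_apply₂ hx hu₁ hu₂).clm_apply hu₃

theorem DifferentiableAt.hasDerivAt_iteratedDeriv {n : ℕ}
    (h : DifferentiableAt 𝕜 (iteratedDeriv n x) t) :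
    HasDerivAt (iteratedDeriv n x) (iteratedDeriv (n + 1) x t) t := by
  rw [iteratedDeriv_succ]
  exact h.hasDerivAt

theorem DifferentiableAt.hasDerivAt_iteratedDeriv_one (h : DifferentiableAt 𝕜 x t) :
    HasDerivAt x (iteratedDeriv 1 x t) t := by
  simpa using h.hasDerivAt

theorem Filter.EventuallyEq.eventuallyEq_of_hasDerivAt {g a g' a' : 𝕜 → E}
    (h : g =ᶠ[𝓝 t] a) (hg : ∀ᶠ s in 𝓝 t, HasDerivAt g (g' s) s)
    (ha : ∀ᶠ s in 𝓝 t, HasDerivAt a (a' s) s) : g' =ᶠ[𝓝 t] a' := by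
  filter_upwards [h.eventually_nhds, hg, ha] with s hs hgs has
  exact hgs.unique (has.congr_of_eventuallyEq hs)

end Curves

section HigherFDeriv

variable {𝕜 : Type*} [NontriviallyNormedField 𝕜]
  {E F : Type*} [NormedAddCommGroup E] [NormedSpace 𝕜 E] [NormedAddCommGroup F] [NormedSpace 𝕜 F]

theorem iteratedFDeriv_three_apply (f : E → F) (z : E) (m : Fin 3 → E) :
    iteratedFDeriv 𝕜 3 f z m = fderiv 𝕜 (fderiv 𝕜 (fderiv 𝕜 f)) z (m 0) (m 1) (m 2) := by
  rw [iteratedFDeriv_succ_apply_right, iteratedFDeriv_two_apply]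
  rfl

theorem iteratedFDeriv_four_apply (f : E → F) (z : E) (m : Fin 4 → E) :
    iteratedFDeriv 𝕜 4 f z m =
      fderiv 𝕜 (fderiv 𝕜 (fderiv 𝕜 (fderiv 𝕜 f))) z (m 0) (m 1) (m 2) (m 3) := by
  rw [iteratedFDeriv_succ_apply_right, iteratedFDeriv_three_apply]
  rfl

theorem ContDiffAt.hasFDerivAt_fderiv {f : E → F} {y : E} {n : WithTop ℕ∞}
    (hf : ContDiffAt 𝕜 n f y) (hn : 2 ≤ n) :
    HasFDerivAt (fderiv 𝕜 f) (fderiv 𝕜 (fderiv 𝕜 f) y) y :=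
  ((hf.fderiv_right (m := 1) hn).differentiableAt one_ne_zero).hasFDerivAt

end HigherFDeriv

section Symmetry

variable {𝕜 : Type*} [RCLike 𝕜]
  {E F : Type*} [NormedAddCommGroup E] [NormedSpace 𝕜 E] [NormedAddCommGroup F] [NormedSpace 𝕜 F]
  {f : E → F} {y : E}

theorem ContDiffAt.fderiv_fderiv_fderiv_swap_left (hf : ContDiffAt 𝕜 3 f y) (a b c : E) :
    fderiv 𝕜 (fderiv 𝕜 (fderiv 𝕜 f)) y a b c = fderiv 𝕜 (fderiv 𝕜 (fderiv 𝕜 f)) y b a c :=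
  congrArg (· c) ((hf.fderiv_right (m := 2) le_rfl).isSymmSndFDerivAt (by simp) a b)

theorem ContDiffAt.fderiv_fderiv_fderiv_swap_right (hf : ContDiffAt 𝕜 3 f y) (a b c : E) :
    fderiv 𝕜 (fderiv 𝕜 (fderiv 𝕜 f)) y a b c = fderiv 𝕜 (fderiv 𝕜 (fderiv 𝕜 f)) y a c b := by
  have hD2 := (hf.fderiv_right (m := 2) le_rfl).hasFDerivAt_fderiv le_rfl
  have hsymm : (fun z => fderiv 𝕜 (fderiv 𝕜 f) z b c) =ᶠ[𝓝 y]
      fun z => fderiv 𝕜 (fderiv 𝕜 f) z c b := by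
    filter_upwards [hf.eventually (by simp)] with z hz
    exact hz.isSymmSndFDerivAt (by norm_num) b c
  have hbc := (hD2.clm_apply (hasFDerivAt_const b y)).clm_apply (hasFDerivAt_const c y)
  have hcb := (hD2.clm_apply (hasFDerivAt_const c y)).clm_apply (hasFDerivAt_const b y)
  simpa using congrArg (· a) ((hbc.congr_of_eventuallyEq hsymm.symm).unique hcb)

end Symmetry

section FaaDiBruno

variable {E F : Type*} [NormedAddCommGroup E] [NormedSpace ℝ E]
  [NormedAddCommGroup F] [NormedSpace ℝ F] {f : E → F} {x : ℝ → E} {s : ℝ}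

theorem hasDerivAt_faaDiBruno_one (hf : DifferentiableAt ℝ f (x s))
    (hx₀ : DifferentiableAt ℝ x s) :
    HasDerivAt (fun s => f (x s)) (fderiv ℝ f (x s) (iteratedDeriv 1 x s)) s :=
  hf.hasFDerivAt.comp_hasDerivAt s hx₀.hasDerivAt_iteratedDeriv_one

theorem hasDerivAt_faaDiBruno_two (hf : ContDiffAt ℝ 2 f (x s))
    (hx₀ : DifferentiableAt ℝ x s) (hx₁ : DifferentiableAt ℝ (iteratedDeriv 1 x) s) :
    HasDerivAt (fun s => fderiv ℝ f (x s) (iteratedDeriv 1 x s))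
      (fderiv ℝ (fderiv ℝ f) (x s) (iteratedDeriv 1 x s) (iteratedDeriv 1 x s)
        + fderiv ℝ f (x s) (iteratedDeriv 2 x s)) s :=
  (hf.hasFDerivAt_fderiv le_rfl).hasDerivAt_comp_apply hx₀.hasDerivAt_iteratedDeriv_one
    hx₁.hasDerivAt_iteratedDeriv

theorem hasDerivAt_faaDiBruno_three (hf : ContDiffAt ℝ 3 f (x s))
    (hx₀ : DifferentiableAt ℝ x s) (hx₁ : DifferentiableAt ℝ (iteratedDeriv 1 x) s)
    (hx₂ : DifferentiableAt ℝ (iteratedDeriv 2 x) s) :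
    HasDerivAt (fun s => fderiv ℝ (fderiv ℝ f) (x s) (iteratedDeriv 1 x s) (iteratedDeriv 1 x s)
        + fderiv ℝ f (x s) (iteratedDeriv 2 x s))
      (fderiv ℝ (fderiv ℝ (fderiv ℝ f)) (x s) (iteratedDeriv 1 x s) (iteratedDeriv 1 x s)
          (iteratedDeriv 1 x s)
        + (3 : ℝ) • fderiv ℝ (fderiv ℝ f) (x s) (iteratedDeriv 1 x s) (iteratedDeriv 2 x s)
        + fderiv ℝ f (x s) (iteratedDeriv 3 x s)) s := by
  have hD1 := hf.hasFDerivAt_fderiv (by norm_num)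
  have hD2 := (hf.fderiv_right (m := 2) le_rfl).hasFDerivAt_fderiv le_rfl
  have h₀ := hx₀.hasDerivAt_iteratedDeriv_one
  have h₁ : HasDerivAt (iteratedDeriv 1 x) (iteratedDeriv 2 x s) s :=
    hx₁.hasDerivAt_iteratedDeriv
  refine ((hD2.hasDerivAt_comp_apply₂ h₀ h₁ h₁).add
    (hD1.hasDerivAt_comp_apply h₀ hx₂.hasDerivAt_iteratedDeriv)).congr_deriv ?_
  rw [(hf.isSymmSndFDerivAt (by norm_num)).eq (iteratedDeriv 2 x s)]
  module

theorem hasDerivAt_faaDiBruno_four (hf : ContDiffAt ℝ 4 f (x s))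
    (hx₀ : DifferentiableAt ℝ x s) (hx₁ : DifferentiableAt ℝ (iteratedDeriv 1 x) s)
    (hx₂ : DifferentiableAt ℝ (iteratedDeriv 2 x) s)
    (hx₃ : DifferentiableAt ℝ (iteratedDeriv 3 x) s) :
    HasDerivAt (fun s => fderiv ℝ (fderiv ℝ (fderiv ℝ f)) (x s) (iteratedDeriv 1 x s)
          (iteratedDeriv 1 x s) (iteratedDeriv 1 x s)
        + (3 : ℝ) • fderiv ℝ (fderiv ℝ f) (x s) (iteratedDeriv 1 x s) (iteratedDeriv 2 x s)
        + fderiv ℝ f (x s) (iteratedDeriv 3 x s))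
      (fderiv ℝ (fderiv ℝ (fderiv ℝ (fderiv ℝ f))) (x s) (iteratedDeriv 1 x s)
          (iteratedDeriv 1 x s) (iteratedDeriv 1 x s) (iteratedDeriv 1 x s)
        + (6 : ℝ) • fderiv ℝ (fderiv ℝ (fderiv ℝ f)) (x s) (iteratedDeriv 1 x s)
          (iteratedDeriv 1 x s) (iteratedDeriv 2 x s)
        + (4 : ℝ) • fderiv ℝ (fderiv ℝ f) (x s) (iteratedDeriv 1 x s) (iteratedDeriv 3 x s)
        + (3 : ℝ) • fderiv ℝ (fderiv ℝ f) (x s) (iteratedDeriv 2 x s) (iteratedDeriv 2 x s)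
        + fderiv ℝ f (x s) (iteratedDeriv 4 x s)) s := by
  have hD1 := hf.hasFDerivAt_fderiv (by norm_num)
  have hD2 := (hf.fderiv_right (m := 3) le_rfl).hasFDerivAt_fderiv (by norm_num)
  have hD3 := ((hf.fderiv_right (m := 3) le_rfl).fderiv_right (m := 2) le_rfl).hasFDerivAt_fderiv
    le_rfl
  have h₀ := hx₀.hasDerivAt_iteratedDeriv_one
  have h₁ : HasDerivAt (iteratedDeriv 1 x) (iteratedDeriv 2 x s) s :=
    hx₁.hasDerivAt_iteratedDeriv
  have h₂ : HasDerivAt (iteratedDeriv 2 x) (iteratedDeriv 3 x s) s :=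
    hx₂.hasDerivAt_iteratedDeriv
  have h₃ : HasDerivAt (iteratedDeriv 3 x) (iteratedDeriv 4 x s) s :=
    hx₃.hasDerivAt_iteratedDeriv
  refine (((hD3.hasDerivAt_comp_apply₃ h₀ h₁ h₁ h₁).add
    ((hD2.hasDerivAt_comp_apply₂ h₀ h₁ h₂).const_smul (3 : ℝ))).add
    (hD1.hasDerivAt_comp_apply h₀ h₃)).congr_deriv ?_
  have hf₃ : ContDiffAt ℝ 3 f (x s) := hf.of_le (by norm_num)
  rw [hf₃.fderiv_fderiv_fderiv_swap_left (iteratedDeriv 2 x s),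
    hf₃.fderiv_fderiv_fderiv_swap_right _ (iteratedDeriv 2 x s)]
  module

end FaaDiBruno

theorem natural_pathway_fourth_deriv_general
    {E F : Type*} [NormedAddCommGroup E] [NormedSpace ℝ E]
    [NormedAddCommGroup F] [NormedSpace ℝ F]
    (f : E → F) (x : ℝ → E) (t₀ : ℝ) (ht₀ : t₀ ∈ Set.Ioo (0 : ℝ) 1)
    (hf : ContDiffAt ℝ 4 f (x t₀))
    (hx1 : ∀ᶠ s in 𝓝 t₀, DifferentiableAt ℝ x s)
    (hx2 : ∀ᶠ s in 𝓝 t₀, DifferentiableAt ℝ (iteratedDeriv 1 x) s)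
    (hx3 : ∀ᶠ s in 𝓝 t₀, DifferentiableAt ℝ (iteratedDeriv 2 x) s)
    (hx4 : DifferentiableAt ℝ (iteratedDeriv 3 x) t₀)
    (hpath : ∀ t ∈ Set.Icc (0 : ℝ) 1, f (x t) = (1 - t) • f (x 0))
    (J : E ≃L[ℝ] F) (hJ : (J : E →L[ℝ] F) = fderiv ℝ f (x t₀))
    (v₁ v₂ v₃ : E) (hv₁ : v₁ = deriv x t₀) (hv₂ : v₂ = iteratedDeriv 2 x t₀)
    (hv₃ : v₃ = iteratedDeriv 3 x t₀) :
    iteratedDeriv 4 x t₀ =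
      -J.symm (iteratedFDeriv ℝ 4 f (x t₀) ![v₁, v₁, v₁, v₁]
        + (6 : ℝ) • iteratedFDeriv ℝ 3 f (x t₀) ![v₁, v₁, v₂]
        + (4 : ℝ) • iteratedFDeriv ℝ 2 f (x t₀) ![v₁, v₃]
        + (3 : ℝ) • iteratedFDeriv ℝ 2 f (x t₀) ![v₂, v₂]) := by
  have hfx : ∀ᶠ s in 𝓝 t₀, ContDiffAt ℝ 4 f (x s) :=
    hx1.self_of_nhds.continuousAt.eventually (hf.eventually (by simp))
  have haffine : (fun s => f (x s)) =ᶠ[𝓝 t₀] fun s => (1 - s) • f (x 0) :=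
    eventually_of_mem (Ioo_mem_nhds ht₀.1 ht₀.2) fun s hs => hpath s (Set.Ioo_subset_Icc_self hs)
  have hderiv₁ := haffine.eventuallyEq_of_hasDerivAt
    (by filter_upwards [hfx, hx1] with s hf hx₀ using
      hasDerivAt_faaDiBruno_one (hf.differentiableAt (by norm_num)) hx₀)
    (Eventually.of_forall fun s => by
      simpa using ((hasDerivAt_id s).const_sub 1).smul_const (f (x 0)))
  have hderiv₂ := hderiv₁.eventuallyEq_of_hasDerivAt
    (by filter_upwards [hfx, hx1, hx2] with s hf hx₀ hx₁ using
      hasDerivAt_faaDiBruno_two (hf.of_le (by norm_num)) hx₀ hx₁)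
    (Eventually.of_forall fun s => hasDerivAt_const s _)
  have hderiv₃ := hderiv₂.eventuallyEq_of_hasDerivAt
    (by filter_upwards [hfx, hx1, hx2, hx3] with s hf hx₀ hx₁ hx₂ using
      hasDerivAt_faaDiBruno_three (hf.of_le (by norm_num)) hx₀ hx₁ hx₂)
    (Eventually.of_forall fun s => hasDerivAt_const s _)
  have hderiv₄ := (hasDerivAt_faaDiBruno_four hf hx1.self_of_nhds hx2.self_of_nhds hx3.self_of_nhds
    hx4).unique ((hasDerivAt_const t₀ _).congr_of_eventuallyEq hderiv₃)
  subst hv₁ hv₂ hv₃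
  rw [← map_neg, ContinuousLinearEquiv.eq_symm_apply, ← ContinuousLinearEquiv.coe_coe, hJ,
    ← iteratedDeriv_one, iteratedFDeriv_four_apply, iteratedFDeriv_three_apply,
    iteratedFDeriv_two_apply, iteratedFDeriv_two_apply]
  exact eq_neg_of_add_eq_zero_right hderiv₄

/-- Fourth-order pathway derivative: with `v₁ = x′(t₀)`, `v₂ = x″(t₀)`,
`v₃ = x⁽³⁾(t₀)`,
`x⁽⁴⁾(t₀) = -J⁻¹ (f⁽⁴⁾[v₁,v₁,v₁,v₁] + 6 • f⁽³⁾[v₁,v₁,v₂] + 4 • f″[v₁,v₃] + 3 • f″[v₂,v₂])`. -/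
theorem natural_pathway_fourth_deriv
    {E F : Type*} [NormedAddCommGroup E] [NormedSpace ℝ E] [CompleteSpace E]
    [NormedAddCommGroup F] [NormedSpace ℝ F] [CompleteSpace F]
    (f : E → F) (x : ℝ → E) (t₀ : ℝ) (ht₀ : t₀ ∈ Set.Ioo (0 : ℝ) 1)
    (hf : ContDiffAt ℝ 4 f (x t₀))
    (hx1 : ∀ᶠ s in 𝓝 t₀, DifferentiableAt ℝ x s)
    (hx2 : ∀ᶠ s in 𝓝 t₀, DifferentiableAt ℝ (iteratedDeriv 1 x) s)
    (hx3 : ∀ᶠ s in 𝓝 t₀, DifferentiableAt ℝ (iteratedDeriv 2 x) s)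
    (hx4 : DifferentiableAt ℝ (iteratedDeriv 3 x) t₀)
    (hpath : ∀ t ∈ Set.Icc (0 : ℝ) 1, f (x t) = (1 - t) • f (x 0))
    (J : E ≃L[ℝ] F) (hJ : (J : E →L[ℝ] F) = fderiv ℝ f (x t₀))
    (v₁ v₂ v₃ : E) (hv₁ : v₁ = deriv x t₀) (hv₂ : v₂ = iteratedDeriv 2 x t₀)
    (hv₃ : v₃ = iteratedDeriv 3 x t₀) :
    iteratedDeriv 4 x t₀ =
      -J.symm (iteratedFDeriv ℝ 4 f (x t₀) ![v₁, v₁, v₁, v₁]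
        + (6 : ℝ) • iteratedFDeriv ℝ 3 f (x t₀) ![v₁, v₁, v₂]
        + (4 : ℝ) • iteratedFDeriv ℝ 2 f (x t₀) ![v₁, v₃]
        + (3 : ℝ) • iteratedFDeriv ℝ 2 f (x t₀) ![v₂, v₂]) :=
  natural_pathway_fourth_deriv_general f x t₀ ht₀ hf hx1 hx2 hx3 hx4 hpath J hJ v₁ v₂ v₃ hv₁ hv₂ hv₃
end

section
/- Let f be C⁵ on a neighbourhood of x₀ and fix v ∈ E. Define the nonlinear part f_nl(a) := f(x₀ + a) − f(x₀) − f′(x₀)(a). Then the four-point stencil for the third directional derivative is fifth-order accurate: the function ε ↦ −120 • f_nl((ε/2)•v) + 48 • f_nl(ε•v) − 8 • f_nl((3ε/2)•v) − ε³ • f⁽³⁾(x₀)[v,v,v] is O(ε⁵) as ε → 0. -/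
/-!
Along the line `t ↦ x₀ + t • v`, Taylor's theorem gives
`f (x₀ + t • v) = ∑_{k ≤ 5} t ^ k / k! • D^k f(x₀)[v, …, v] + o(t ^ 5)`.
In `f_nl` the terms `k = 0, 1` drop out, and at the nodes `c ε` with `c = 1/2, 1, 3/2` the
weights `w = -120, 48, -8` satisfy `∑ w c ^ k = 0` for `k = 2, 4` and `= 3!` for `k = 3`,
so only `ε³ • D³f(x₀)[v, v, v]` and terms of order `ε⁵` survive.
-/

open Topology Asymptotics
open Set Filter Finset Nat

section LineDerivative

variable {𝕜 E F G : Type*} [NontriviallyNormedField 𝕜]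
  [NormedAddCommGroup E] [NormedSpace 𝕜 E] [NormedAddCommGroup F] [NormedSpace 𝕜 F]
  [NormedAddCommGroup G] [NormedSpace 𝕜 G]

theorem ContinuousLinearMap.iteratedFDeriv_comp_right_of_contDiffAt (g : G →L[𝕜] E) {f : E → F}
    {x : G} {n : ℕ} (hf : ContDiffAt 𝕜 n f (g x)) :
    iteratedFDeriv 𝕜 n (f ∘ g) x =
      (iteratedFDeriv 𝕜 n f (g x)).compContinuousLinearMap fun _ => g := by
  obtain ⟨u, hu, hxu, hfu⟩ := hf.contDiffOn' le_rfl (by simp)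
  rw [insert_eq_of_mem (mem_univ _), univ_inter] at hfu
  have hu' : IsOpen (g ⁻¹' u) := hu.preimage g.continuous
  rw [← iteratedFDerivWithin_of_isOpen n hu' hxu, ← iteratedFDerivWithin_of_isOpen n hu hxu]
  exact g.iteratedFDerivWithin_comp_right hfu hu.uniqueDiffOn hu'.uniqueDiffOn hxu le_rfl

theorem ContDiffAt.iteratedDeriv_comp_add_smul {f : E → F} {x : E} {n : ℕ}
    (hf : ContDiffAt 𝕜 n f x) (v : E) :
    iteratedDeriv n (fun t : 𝕜 => f (x + t • v)) 0 = iteratedFDeriv 𝕜 n f x fun _ => v := by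
  have hline : (fun t : 𝕜 => f (x + t • v)) =
      (fun z => f (x + z)) ∘ ContinuousLinearMap.toSpanSingleton 𝕜 v := by
    ext t
    simp
  have hshift :
      ContDiffAt 𝕜 n (fun z => f (x + z)) (ContinuousLinearMap.toSpanSingleton 𝕜 v 0) := by
    rw [map_zero]
    exact (show ContDiffAt 𝕜 n f (x + 0) by simpa using hf).comp 0
      (contDiffAt_const.add contDiffAt_id)
  rw [iteratedDeriv_eq_iteratedFDeriv, hline,
    ContinuousLinearMap.iteratedFDeriv_comp_right_of_contDiffAt _ hshift]
  simp [iteratedFDeriv_comp_add_left]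

end LineDerivative

section Taylor

variable {E F : Type*} [NormedAddCommGroup E] [NormedSpace ℝ E]
  [NormedAddCommGroup F] [NormedSpace ℝ F]

theorem ContDiffAt.isLittleO_sub_taylor {g : ℝ → F} {x₀ : ℝ} {n : ℕ}
    (hg : ContDiffAt ℝ n g x₀) :
    (fun x => g x - ∑ k ∈ range (n + 1), ((k ! : ℝ)⁻¹ * (x - x₀) ^ k) • iteratedDeriv k g x₀)
      =o[𝓝 x₀] fun x => (x - x₀) ^ n := by
  obtain ⟨u, hu, hxu, hgu⟩ := hg.contDiffOn' le_rfl (by simp)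
  rw [insert_eq_of_mem (mem_univ _), univ_inter] at hgu
  obtain ⟨δ, hδ, hball⟩ := Metric.isOpen_iff.1 hu x₀ hxu
  have htaylor := taylor_isLittleO (convex_ball x₀ δ) (Metric.mem_ball_self hδ) (hgu.mono hball)
  rw [Metric.isOpen_ball.nhdsWithin_eq (Metric.mem_ball_self hδ)] at htaylor
  convert htaylor using 3 with x
  rw [taylor_within_apply]
  refine sum_congr rfl fun k _ => ?_
  rw [iteratedDerivWithin_of_isOpen Metric.isOpen_ball (Metric.mem_ball_self hδ)]

theorem ContDiffAt.isLittleO_sub_taylor_comp_add_smul {f : E → F} {x : E} {n : ℕ}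
    (hf : ContDiffAt ℝ n f x) (v : E) :
    (fun t : ℝ => f (x + t • v) -
        ∑ k ∈ range (n + 1), ((k ! : ℝ)⁻¹ * t ^ k) • iteratedFDeriv ℝ k f x fun _ => v)
      =o[𝓝 0] fun t => t ^ n := by
  have hline : ContDiffAt ℝ n (fun t : ℝ => f (x + t • v)) 0 :=
    (show ContDiffAt ℝ n f (x + (0 : ℝ) • v) by simpa using hf).comp 0
      (contDiffAt_const.add (contDiffAt_id.smul contDiffAt_const))
  convert hline.isLittleO_sub_taylor using 4 with t k hk
  · rw [sub_zero,
      (hf.of_le (by exact_mod_cast mem_range_succ_iff.1 hk)).iteratedDeriv_comp_add_smul]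
  · rw [sub_zero]

end Taylor

theorem Asymptotics.IsBigO.comp_const_mul_pow {α : Type*} [Norm α] {g : ℝ → α} {n : ℕ}
    (hg : g =O[𝓝 0] fun t => t ^ n) (c : ℝ) : (fun t => g (c * t)) =O[𝓝 0] fun t => t ^ n := by
  have hc : Tendsto (c * ·) (𝓝 0) (𝓝 0) := by
    simpa using (continuous_const_mul c).tendsto 0
  refine (hg.comp_tendsto hc).trans ?_
  simpa [Function.comp_def, mul_pow] using isBigO_const_mul_self (c ^ n) (fun t : ℝ => t ^ n) _

theorem third_directional_derivative_stencil_order5_general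
    {E F : Type*} [NormedAddCommGroup E] [NormedSpace ℝ E]
    [NormedAddCommGroup F] [NormedSpace ℝ F]
    (f : E → F) (x₀ v : E)
    (hf : ContDiffAt ℝ 5 f x₀)
    (fnl : E → F) (hfnl : ∀ a, fnl a = f (x₀ + a) - f x₀ - fderiv ℝ f x₀ a) :
    (fun ε : ℝ =>
        -(120 : ℝ) • fnl ((ε / 2) • v) + (48 : ℝ) • fnl (ε • v)
          - (8 : ℝ) • fnl ((3 * ε / 2) • v)
          - ε ^ 3 • iteratedFDeriv ℝ 3 f x₀ ![v, v, v])
      =O[𝓝 (0 : ℝ)] fun ε => ε ^ 5 := by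
  set R := fun t : ℝ => f (x₀ + t • v) -
    ∑ k ∈ range (5 + 1), ((k ! : ℝ)⁻¹ * t ^ k) • iteratedFDeriv ℝ k f x₀ fun _ => v with hR
  have hRO : R =O[𝓝 0] fun t => t ^ 5 :=
    (hf.isLittleO_sub_taylor_comp_add_smul (n := 5) v).isBigO
  set d₅ := iteratedFDeriv ℝ 5 f x₀ fun _ => v
  -- `-11/80 = (-120 * (1/2)^5 + 48 - 8 * (3/2)^5) / 5!` is the fifth-order coefficient left over.
  have hstencil : (fun ε : ℝ =>
        -(120 : ℝ) • fnl ((ε / 2) • v) + (48 : ℝ) • fnl (ε • v)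
          - (8 : ℝ) • fnl ((3 * ε / 2) • v)
          - ε ^ 3 • iteratedFDeriv ℝ 3 f x₀ ![v, v, v]) = fun ε =>
        -(120 : ℝ) • R (2⁻¹ * ε) + (48 : ℝ) • R ε - (8 : ℝ) • R (3 / 2 * ε)
          - ε ^ 5 • ((11 / 80 : ℝ) • d₅) := by
    ext ε
    have h3 : iteratedFDeriv ℝ 3 f x₀ ![v, v, v] = iteratedFDeriv ℝ 3 f x₀ fun _ => v := by
      congr 1; ext i; fin_cases i <;> rfl
    rw [show ε / 2 = 2⁻¹ * ε by ring, show 3 * ε / 2 = 3 / 2 * ε by ring]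
    simp only [hfnl, hR, h3, sum_range_succ, sum_range_zero, iteratedFDeriv_zero_apply,
      iteratedFDeriv_one_apply, map_smul, Nat.factorial]
    push_cast
    module
  have hd₅ : (fun ε : ℝ => ε ^ 5 • ((11 / 80 : ℝ) • d₅)) =O[𝓝 0] fun ε => ε ^ 5 := by
    simpa using (ContinuousLinearMap.toSpanSingleton ℝ ((11 / 80 : ℝ) • d₅)).isBigO_comp
      (· ^ 5) (𝓝 (0 : ℝ))
  rw [hstencil]
  exact ((((hRO.comp_const_mul_pow _).const_smul_left _).add (hRO.const_smul_left _)).sub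
    ((hRO.comp_const_mul_pow _).const_smul_left _)).sub hd₅

/-- Fourth-order-accurate stencil for the third directional derivative:
`-120 • f_nl((ε/2)•v) + 48 • f_nl(ε•v) - 8 • f_nl((3ε/2)•v) = ε³ • f⁽³⁾(x₀)[v,v,v] + O(ε⁵)`. -/
theorem third_directional_derivative_stencil_order5
    {E F : Type*} [NormedAddCommGroup E] [NormedSpace ℝ E] [CompleteSpace E]
    [NormedAddCommGroup F] [NormedSpace ℝ F] [CompleteSpace F]
    (f : E → F) (x₀ v : E)
    (hf : ContDiffAt ℝ 5 f x₀)
    (fnl : E → F) (hfnl : ∀ a, fnl a = f (x₀ + a) - f x₀ - fderiv ℝ f x₀ a) :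
    (fun ε : ℝ =>
        -(120 : ℝ) • fnl ((ε / 2) • v) + (48 : ℝ) • fnl (ε • v)
          - (8 : ℝ) • fnl ((3 * ε / 2) • v)
          - ε ^ 3 • iteratedFDeriv ℝ 3 f x₀ ![v, v, v])
      =O[𝓝 (0 : ℝ)] fun ε => ε ^ 5 :=
  third_directional_derivative_stencil_order5_general f x₀ v hf fnl hfnl
end

section
/- Let f be C³ on a neighbourhood of x₀ and fix u, z ∈ E. Then the four-point mixed-derivative stencil applied to a first-order direction ε•u and a third-order direction ε³•z is fifth-order accurate: the function ε ↦ f(x₀ + ε•u + ε³•z) − f(x₀ + ε³•z) − f(x₀ + ε•u) + f(x₀) − ε⁴ • f″(x₀)[u,z] is O(ε⁵) as ε → 0. -/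
/-!
Let `R` be the second-order Taylor remainder of `f` at `x₀`. By symmetry of `f″(x₀)`, the stencil
with steps `a = ε • u`, `b = ε³ • z`, minus `f″(x₀)[a, b] = ε⁴ • f″(x₀)[u, z]`, equals
`(R (a + b) - R a) - (R b - R 0)`. The derivative `f′(x₀ + h) - f′(x₀) - f″(x₀) h` of `R` is
`O(‖h‖²)`, so the mean value inequality bounds the two brackets by `(‖a‖ + ‖b‖)² ‖b‖ = O(ε⁵)`
and `‖b‖³ = O(ε⁹)`.
-/

open Topology Asymptotics Filter Metric

section MeanValue

variable {α E G : Type*} [NormedAddCommGroup E] [NormedSpace ℝ E]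
  [NormedAddCommGroup G] [NormedSpace ℝ G]

theorem isBigO_sub_of_hasFDerivAt_of_isBigO_norm_pow {g : E → G} {g' : E → E →L[ℝ] G} {n : ℕ}
    (hg : ∀ᶠ h in 𝓝 0, HasFDerivAt g (g' h) h) (hg' : g' =O[𝓝 0] fun h => ‖h‖ ^ n)
    {l : Filter α} {a b : α → E} (ha : Tendsto a l (𝓝 0)) (hb : Tendsto b l (𝓝 0)) :
    (fun t => g (a t + b t) - g (a t)) =O[l] fun t => (‖a t‖ + ‖b t‖) ^ n * ‖b t‖ := by
  obtain ⟨C, hC, hC'⟩ := hg'.exists_pos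
  obtain ⟨δ, hδ, hball⟩ := eventually_nhds_iff_ball.1 (hg.and hC'.bound)
  have hsmall : ∀ᶠ t in l, ‖a t‖ + ‖b t‖ < δ := by
    have := (tendsto_norm_zero.comp ha).add (tendsto_norm_zero.comp hb)
    rw [add_zero] at this
    exact this.eventually (gt_mem_nhds hδ)
  refine IsBigO.of_bound C ?_
  filter_upwards [hsmall] with t ht
  set R := ‖a t‖ + ‖b t‖
  have hsub : closedBall (0 : E) R ⊆ ball 0 δ := closedBall_subset_ball ht
  have hmvt := (convex_closedBall (0 : E) R).norm_image_sub_le_of_norm_hasFDerivWithin_le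
    (f := g) (C := C * R ^ n) (fun h hh => (hball h (hsub hh)).1.hasFDerivWithinAt)
    (fun h hh => (hball h (hsub hh)).2.trans ?_)
    (mem_closedBall_zero_iff.2 (le_add_of_nonneg_right (norm_nonneg _)))
    (mem_closedBall_zero_iff.2 (norm_add_le _ _))
  · rw [add_sub_cancel_left] at hmvt
    rw [norm_mul, norm_norm, norm_pow, Real.norm_of_nonneg (by positivity)]
    linarith
  · rw [norm_pow, norm_norm]
    gcongr
    exact mem_closedBall_zero_iff.1 hh

theorem isBigO_sub_sub_fderiv_norm_sq {φ : E → G} {x : E}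
    (hφ : ∀ᶠ y in 𝓝 x, DifferentiableAt ℝ φ y) (hφ' : DifferentiableAt ℝ (fderiv ℝ φ) x) :
    (fun h => φ (x + h) - φ x - fderiv ℝ φ x h) =O[𝓝 0] fun h => ‖h‖ ^ 2 := by
  have hshift : Tendsto (x + ·) (𝓝 (0 : E)) (𝓝 x) :=
    (continuous_const_add x).tendsto' 0 x (add_zero x)
  have hg : ∀ᶠ h in 𝓝 (0 : E), HasFDerivAt (fun h => φ (x + h) - fderiv ℝ φ x h)
      (fderiv ℝ φ (x + h) - fderiv ℝ φ x) h := by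
    filter_upwards [hshift.eventually hφ] with h hh
    exact ((hasFDerivAt_comp_add_left x).2 hh.hasFDerivAt).sub (fderiv ℝ φ x).hasFDerivAt
  have hg' : (fun h => fderiv ℝ φ (x + h) - fderiv ℝ φ x) =O[𝓝 0] fun h : E => ‖h‖ ^ 1 := by
    simpa [Function.comp_def] using (hφ'.hasFDerivAt.isBigO_sub.comp_tendsto hshift).norm_right
  have key := isBigO_sub_of_hasFDerivAt_of_isBigO_norm_pow hg hg'
    (a := fun _ => 0) tendsto_const_nhds tendsto_id
  simp only [zero_add, add_zero, map_zero, sub_zero, norm_zero, id, pow_one] at key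
  simpa [sub_right_comm _ (φ x), sq] using key

end MeanValue

section QuadraticRemainder

variable {E F : Type*} [NormedAddCommGroup E] [NormedSpace ℝ E]
  [NormedAddCommGroup F] [NormedSpace ℝ F]

noncomputable def quadraticRemainder (f : E → F) (x h : E) : F :=
  f (x + h) - f x - fderiv ℝ f x h - (2⁻¹ : ℝ) • fderiv ℝ (fderiv ℝ f) x h h

theorem four_point_stencil_eq_quadraticRemainder {f : E → F} {x : E}
    (hsymm : IsSymmSndFDerivAt ℝ f x) (a b : E) :
    f (x + a + b) - f (x + b) - f (x + a) + f x - fderiv ℝ (fderiv ℝ f) x a b =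
      (quadraticRemainder f x (a + b) - quadraticRemainder f x a) -
        (quadraticRemainder f x b - quadraticRemainder f x 0) := by
  simp only [quadraticRemainder, add_zero, map_add, map_zero, add_apply, smul_zero, add_assoc,
    hsymm b a]
  module

theorem hasFDerivAt_quadraticRemainder {f : E → F} {x h : E} (hsymm : IsSymmSndFDerivAt ℝ f x)
    (hf : DifferentiableAt ℝ f (x + h)) :
    HasFDerivAt (quadraticRemainder f x)
      (fderiv ℝ f (x + h) - fderiv ℝ f x - fderiv ℝ (fderiv ℝ f) x h) h := by
  let B := fderiv ℝ (fderiv ℝ f) x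
  have hB : HasFDerivAt (fun y => B y y) ((B h).comp (.id ℝ E) + B.flip h) h :=
    B.hasFDerivAt.clm_apply (hasFDerivAt_id h)
  refine HasFDerivAt.congr_fderiv ((((hasFDerivAt_comp_add_left x).2 hf.hasFDerivAt).sub_const
    (f x)).sub (fderiv ℝ f x).hasFDerivAt |>.sub (hB.const_smul (2⁻¹ : ℝ))) ?_
  ext v
  simp only [sub_apply, smul_apply, add_apply, ContinuousLinearMap.comp_apply,
    ContinuousLinearMap.id_apply, ContinuousLinearMap.flip_apply]
  rw [show B v h = B h v from hsymm v h]
  module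

theorem ContDiffAt.eventually_hasFDerivAt_quadraticRemainder {f : E → F} {x : E}
    (hf : ContDiffAt ℝ 2 f x) :
    ∀ᶠ h in 𝓝 0, HasFDerivAt (quadraticRemainder f x)
      (fderiv ℝ f (x + h) - fderiv ℝ f x - fderiv ℝ (fderiv ℝ f) x h) h := by
  have hshift : Tendsto (x + ·) (𝓝 (0 : E)) (𝓝 x) :=
    (continuous_const_add x).tendsto' 0 x (add_zero x)
  filter_upwards [hshift.eventually (hf.eventually (by simp))] with h hh
  exact hasFDerivAt_quadraticRemainder (hf.isSymmSndFDerivAt (by simp))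
    (hh.differentiableAt (by simp))

end QuadraticRemainder

theorem isBigO_smul_const {α E : Type*} [NormedAddCommGroup E] [NormedSpace ℝ E] (l : Filter α)
    (c : α → ℝ) (v : E) : (fun t => c t • v) =O[l] c :=
  isBigO_of_le' l (c := ‖v‖) fun _ => (norm_smul _ v).trans_le (mul_comm _ _).le

theorem isBigO_norm_add_norm_pow_mul_norm {E : Type*} [NormedAddCommGroup E] {a b : ℝ → E}
    {n k : ℕ} (hk : 1 ≤ k) (ha : a =O[𝓝 0] id) (hb : b =O[𝓝 0] fun ε => ε ^ k) :
    (fun ε => (‖a ε‖ + ‖b ε‖) ^ n * ‖b ε‖) =O[𝓝 0] fun ε => ε ^ (n + k) := by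
  have hb' : b =O[𝓝 0] id := by
    refine hb.trans (IsBigO.of_bound 1 ?_)
    filter_upwards [closedBall_mem_nhds (0 : ℝ) one_pos] with ε hε
    rw [mem_closedBall_zero_iff] at hε
    rw [one_mul, norm_pow]
    exact pow_le_of_le_one (norm_nonneg ε) hε (by omega)
  simpa [pow_add] using
    (((ha.norm_left.add hb'.norm_left).pow n).mul hb.norm_left)

theorem mixed_derivative_stencil_c1_c3_general
    {E F : Type*} [NormedAddCommGroup E] [NormedSpace ℝ E]
    [NormedAddCommGroup F] [NormedSpace ℝ F]
    (f : E → F) (x₀ u z : E)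
    (hf : ContDiffAt ℝ 3 f x₀) :
    (fun ε : ℝ =>
        f (x₀ + ε • u + ε ^ 3 • z) - f (x₀ + ε ^ 3 • z) - f (x₀ + ε • u) + f x₀
          - ε ^ 4 • iteratedFDeriv ℝ 2 f x₀ ![u, z])
      =O[𝓝 (0 : ℝ)] fun ε => ε ^ 5 := by
  have hsymm : IsSymmSndFDerivAt ℝ f x₀ := hf.isSymmSndFDerivAt (by norm_num)
  have hR := (hf.of_le (by norm_num)).eventually_hasFDerivAt_quadraticRemainder
  have hR' := isBigO_sub_sub_fderiv_norm_sq (φ := fderiv ℝ f)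
    ((hf.eventually (by norm_num)).mono fun y hy =>
      (hy.fderiv_right (m := 2) (by norm_num)).differentiableAt (by simp))
    ((hf.fderiv_right (m := 2) (by norm_num)).fderiv_right (m := 1) (by norm_num)
      |>.differentiableAt (by simp))
  have hu : (fun ε : ℝ => ε • u) =O[𝓝 0] id := isBigO_smul_const _ id u
  have hz : (fun ε : ℝ => ε ^ 3 • z) =O[𝓝 0] fun ε => ε ^ 3 := isBigO_smul_const _ (· ^ 3) z
  have hz0 : Tendsto (fun ε : ℝ => ε ^ 3 • z) (𝓝 0) (𝓝 0) :=
    hz.trans_tendsto ((continuous_pow 3).tendsto' 0 0 (zero_pow three_ne_zero))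
  have h₁ := (isBigO_sub_of_hasFDerivAt_of_isBigO_norm_pow hR hR'
    (hu.trans_tendsto tendsto_id) hz0).trans
    (isBigO_norm_add_norm_pow_mul_norm (by norm_num) hu hz)
  have h₂ := (isBigO_sub_of_hasFDerivAt_of_isBigO_norm_pow hR hR' tendsto_const_nhds hz0).trans
    (isBigO_norm_add_norm_pow_mul_norm (by norm_num) (isBigO_zero _ _) hz)
  refine (h₁.sub h₂).congr_left fun ε => ?_
  have hscale : ε ^ 4 • fderiv ℝ (fderiv ℝ f) x₀ u z
      = fderiv ℝ (fderiv ℝ f) x₀ (ε • u) (ε ^ 3 • z) := by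
    simp only [map_smul, smul_apply, smul_smul]
    module
  simp only [iteratedFDeriv_two_apply, Matrix.cons_val_zero, Matrix.cons_val_one, zero_add]
  rw [hscale, four_point_stencil_eq_quadraticRemainder hsymm]

/-- Four-point mixed-derivative stencil with a first-order direction `ε•u`
and a third-order direction `ε³•z`:
`f(x₀+ε•u+ε³•z) - f(x₀+ε³•z) - f(x₀+ε•u) + f(x₀) = ε⁴ • f″(x₀)[u,z] + O(ε⁵)`. -/
theorem mixed_derivative_stencil_c1_c3
    {E F : Type*} [NormedAddCommGroup E] [NormedSpace ℝ E] [CompleteSpace E]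
    [NormedAddCommGroup F] [NormedSpace ℝ F] [CompleteSpace F]
    (f : E → F) (x₀ u z : E)
    (hf : ContDiffAt ℝ 3 f x₀) :
    (fun ε : ℝ =>
        f (x₀ + ε • u + ε ^ 3 • z) - f (x₀ + ε ^ 3 • z) - f (x₀ + ε • u) + f x₀
          - ε ^ 4 • iteratedFDeriv ℝ 2 f x₀ ![u, z])
      =O[𝓝 (0 : ℝ)] fun ε => ε ^ 5 :=
  mixed_derivative_stencil_c1_c3_general f x₀ u z hf
end
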